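/- Fix d_A, d_B, r ≥ 1 with d_A ≤ r·d_B and ε ∈ (0,1). Let S := ∑_{i=1}^{d_A} |i⟩_{BE}⟨i|_A ∈ ℂ^{(r d_B)×d_A}, let Ṽ₀ : ℂ^{d_A} → ℂ^{d_B}⊗ℂ^{r} be any isometry, and for U ∈ U(r d_B) set Ṽ_U := U S, V_U := √(1−ε²)·|0⟩_F ⊗ Ṽ₀ + ε·|1⟩_F ⊗ Ṽ_U, and J_U := Tr_E[(1_{d_A} ⊗ V_U) Ψ (1_{d_A} ⊗ V_U)†]. Then for all unitaries U₁, U₂ ∈ U(r d_B): ‖J_{U₁} − J_{U₂}‖₁ ≥ 2ε√(1−ε²)·‖C‖₁ − 2ε², where C := Tr_E[(1_{d_A} ⊗ Ṽ₀) Ψ (1_{d_A} ⊗ (Ṽ_{U₁} − Ṽ_{U₂}))†]. -/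

import Mathlib

noncomputable section
open scoped Kronecker Matrix ComplexOrder
open MeasureTheory

namespace Stmt

instance {m n : Type*} : MeasurableSpace (Matrix m n ℂ) := by unfold Matrix; infer_instance

/-- Trace norm `‖X‖₁ = Tr √(XᴴX)` (sum of singular values). -/
def traceNorm {m n : Type*} [Fintype m] [Fintype n] [DecidableEq n] (X : Matrix m n ℂ) : ℝ :=
  (((Matrix.posSemidef_conjTranspose_mul_self X).1.eigenvectorUnitary : Matrix n n ℂ) *
    Matrix.diagonal (((↑) : ℝ → ℂ) ∘ (Real.sqrt ∘ (Matrix.posSemidef_conjTranspose_mul_self X).1.eigenvalues)) *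
    (star (Matrix.posSemidef_conjTranspose_mul_self X).1.eigenvectorUnitary : Matrix n n ℂ)).trace.re

/-- ℓ²→ℓ² operator norm of a matrix (largest singular value). -/
def opNorm {m n : Type*} [Fintype m] [Fintype n] [DecidableEq n] (X : Matrix m n ℂ) : ℝ :=
  ‖LinearMap.toContinuousLinearMap (Matrix.toEuclideanLin X)‖

/-- Frobenius norm `‖X‖₂ = √(Tr(XᴴX))`. -/
def frobNorm {m n : Type*} [Fintype m] [Fintype n] (X : Matrix m n ℂ) : ℝ :=
  Real.sqrt ((Xᴴ * X).trace.re)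

/-- Projector `|Ψ⟩⟨Ψ|` onto the maximally entangled unit vector
`|Ψ⟩ = (1/√d) ∑ᵢ |i⟩⊗|i⟩`. -/
def Psi (d : ℕ) : Matrix (Fin d × Fin d) (Fin d × Fin d) ℂ :=
  fun p q => if p.1 = p.2 ∧ q.1 = q.2 then (1 / (d : ℂ)) else 0

/-- Partial trace over the environment (last) factor `E`. -/
def ptrE {A A' B E : Type*} [Fintype E] (M : Matrix (A × B × E) (A' × B × E) ℂ) :
    Matrix (A × B) (A' × B) ℂ :=
  fun x y => ∑ e, M (x.1, x.2, e) (y.1, y.2, e)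

/-- Partial trace over the last factor `E` of a fourfold product. -/
def ptrE4 {A F B E : Type*} [Fintype E]
    (M : Matrix (A × F × B × E) (A × F × B × E) ℂ) : Matrix (A × F × B) (A × F × B) ℂ :=
  fun x y => ∑ e, M (x.1, x.2.1, x.2.2, e) (y.1, y.2.1, y.2.2, e)

/-- Partial trace over the first factor `F`. -/
def ptrF {F X Y : Type*} [Fintype F] (M : Matrix (F × X) (F × Y) ℂ) : Matrix X Y ℂ :=
  fun x y => ∑ f, M (f, x) (f, y)

/-- Partial trace over the second factor. -/
def ptrSecond {F X : Type*} [Fintype X] (M : Matrix (F × X) (F × X) ℂ) : Matrix F F ℂ :=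
  fun f f' => ∑ x, M (f, x) (f', x)

/-- The diagonal matrix `O = ε·diag(e^{iθ}, e^{−iθ}, …)` (last entry `0` if `d` is odd). -/
def Omat (d : ℕ) (ε θ : ℝ) : Matrix (Fin d) (Fin d) ℂ :=
  Matrix.diagonal fun j =>
    if Odd d ∧ (j : ℕ) = d - 1 then 0
    else if Even (j : ℕ) then (ε : ℂ) * Complex.exp (Complex.I * (θ : ℂ))
    else (ε : ℂ) * Complex.exp (-(Complex.I * (θ : ℂ)))

/-- The traceless version `Ō = O − (Tr O / d)·1`. -/
def Obar (d : ℕ) (ε θ : ℝ) : Matrix (Fin d) (Fin d) ℂ :=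
  Omat d ε θ - ((Omat d ε θ).trace / (d : ℂ)) • 1

/-- Identification of `B × E` indices with `Fin (r·d_B)`. -/
def idxBE {d_B r : ℕ} (p : Fin d_B × Fin r) : Fin (r * d_B) :=
  finCongr (Nat.mul_comm d_B r) (finProdFinEquiv p)

/-- Reindex the rows of a square matrix on `ℂ^{r·d_B}` so that it becomes a map
`ℂ^{r d_B} → ℂ^{d_B}⊗ℂ^{r}`. -/
def toBE {d_B r : ℕ} (M : Matrix (Fin (r * d_B)) (Fin (r * d_B)) ℂ) :
    Matrix (Fin d_B × Fin r) (Fin (r * d_B)) ℂ :=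
  fun p a => M (idxBE p) a

/-- `Ψ` with its second (column) tensor factor reindexed as `B × E`. -/
def PsiBE (d_B r : ℕ) :
    Matrix (Fin (r * d_B) × Fin (r * d_B)) (Fin (r * d_B) × (Fin d_B × Fin r)) ℂ :=
  fun p q => Psi (r * d_B) p (q.1, idxBE q.2)

/-- The inclusion `S` of the first `d_A` standard basis vectors of `ℂ^{d_B}⊗ℂ^{r}`. -/
def Smat (d_A d_B r : ℕ) : Matrix (Fin d_B × Fin r) (Fin d_A) ℂ :=
  fun p a => if ((finProdFinEquiv p : Fin (d_B * r)) : ℕ) = (a : ℕ) then 1 else 0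

/-- `V = √(1−ε²)·|0⟩_F ⊗ V₀ + ε·|1⟩_F ⊗ V₁`. -/
def Vfull {d_A d_B r : ℕ} (ε : ℝ) (V0 VU : Matrix (Fin d_B × Fin r) (Fin d_A) ℂ) :
    Matrix (Fin 2 × Fin d_B × Fin r) (Fin d_A) ℂ :=
  fun p a =>
    (if p.1 = 0 then (Real.sqrt (1 - ε ^ 2) : ℂ) * V0 p.2 a else 0) +
    (if p.1 = 1 then (ε : ℂ) * VU p.2 a else 0)

/-- Kraus operator `K_i = (1 ⊗ ⟨i|_E) V₀`. -/
def Kraus {d_A d_B r : ℕ} (V0 : Matrix (Fin d_B × Fin r) (Fin d_A) ℂ) (i : Fin r) :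
    Matrix (Fin d_B) (Fin d_A) ℂ :=
  fun b a => V0 (b, i) a

/-- `V_U = U(1+O)U†` regarded as a map `ℂ^{r d_B} → ℂ^{d_B}⊗ℂ^{r}`. -/
def Veq (d_B r : ℕ) (ε θ : ℝ) (U : Matrix (Fin (r * d_B)) (Fin (r * d_B)) ℂ) :
    Matrix (Fin d_B × Fin r) (Fin (r * d_B)) ℂ :=
  toBE (U * (1 + Omat (r * d_B) ε θ) * Uᴴ)

/-- Choi state `J_U = Tr_E[(1 ⊗ V_U) Ψ (1 ⊗ V_U)†]` in the case `d_A = r·d_B`. -/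
def Jeq (d_B r : ℕ) (ε θ : ℝ) (U : Matrix (Fin (r * d_B)) (Fin (r * d_B)) ℂ) :
    Matrix (Fin (r * d_B) × Fin d_B) (Fin (r * d_B) × Fin d_B) ℂ :=
  ptrE (((1 : Matrix (Fin (r * d_B)) (Fin (r * d_B)) ℂ) ⊗ₖ Veq d_B r ε θ U) * Psi (r * d_B) *
    ((1 : Matrix (Fin (r * d_B)) (Fin (r * d_B)) ℂ) ⊗ₖ Veq d_B r ε θ U)ᴴ)

/-- Choi state `J_U = Tr_E[(1 ⊗ V_U) Ψ (1 ⊗ V_U)†]` in the case `d_A ≤ r·d_B`. -/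
def Jle (d_A d_B r : ℕ) (ε : ℝ) (V0 : Matrix (Fin d_B × Fin r) (Fin d_A) ℂ)
    (U : Matrix (Fin d_B × Fin r) (Fin d_B × Fin r) ℂ) :
    Matrix (Fin d_A × Fin 2 × Fin d_B) (Fin d_A × Fin 2 × Fin d_B) ℂ :=
  ptrE4 (((1 : Matrix (Fin d_A) (Fin d_A) ℂ) ⊗ₖ Vfull ε V0 (U * Smat d_A d_B r)) * Psi d_A *
    ((1 : Matrix (Fin d_A) (Fin d_A) ℂ) ⊗ₖ Vfull ε V0 (U * Smat d_A d_B r))ᴴ)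

/-- `C = Tr_E[(1 ⊗ Ṽ₀) Ψ (1 ⊗ (Ṽ_{U₁} − Ṽ_{U₂}))†]`. -/
def Cmat (d_A d_B r : ℕ) (V0 : Matrix (Fin d_B × Fin r) (Fin d_A) ℂ)
    (U₁ U₂ : Matrix (Fin d_B × Fin r) (Fin d_B × Fin r) ℂ) :
    Matrix (Fin d_A × Fin d_B) (Fin d_A × Fin d_B) ℂ :=
  ptrE (((1 : Matrix (Fin d_A) (Fin d_A) ℂ) ⊗ₖ V0) * Psi d_A *
    ((1 : Matrix (Fin d_A) (Fin d_A) ℂ) ⊗ₖ (U₁ * Smat d_A d_B r - U₂ * Smat d_A d_B r))ᴴ)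

/-- `A_U = Tr_E[(1 ⊗ U Ō U†) Ψ]`. -/
def Amat (d_B r : ℕ) (ε θ : ℝ) (U : Matrix (Fin (r * d_B)) (Fin (r * d_B)) ℂ) :
    Matrix (Fin (r * d_B) × Fin d_B) (Fin (r * d_B) × Fin d_B) ℂ :=
  ptrE (((1 : Matrix (Fin (r * d_B)) (Fin (r * d_B)) ℂ) ⊗ₖ toBE (U * Obar (r * d_B) ε θ * Uᴴ)) *
    PsiBE d_B r)


theorem sandwich {d : ℕ} {R R' : Type*} [Fintype R] [Fintype R']
    (V : Matrix R (Fin d) ℂ) (W : Matrix R' (Fin d) ℂ) (a a' : Fin d) (p : R) (p' : R') :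
    (((1 : Matrix (Fin d) (Fin d) ℂ) ⊗ₖ V) * Psi d * ((1 : Matrix (Fin d) (Fin d) ℂ) ⊗ₖ W)ᴴ)
      ((a,p)) ((a',p')) = (1/(d:ℂ)) * (V p a * star (W p' a')) := by
  simp only [Matrix.mul_apply, Matrix.conjTranspose_apply, Matrix.kroneckerMap_apply,
    Matrix.one_apply, Psi, Fintype.sum_prod_type, ite_and, mul_ite, ite_mul, zero_mul, mul_zero,
    one_mul, mul_one, apply_ite (starRingEnd ℂ), star_zero, star_mul']
  simp [Finset.sum_ite_eq, Finset.sum_ite_eq', apply_ite (starRingEnd ℂ)]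
  ring

variable {n : Type*} [Fintype n] [DecidableEq n]

theorem aux_hdiag (X : Matrix n n ℂ) :
    (X * ((Matrix.posSemidef_conjTranspose_mul_self X).1.eigenvectorUnitary : Matrix n n ℂ))ᴴ *
      (X * ((Matrix.posSemidef_conjTranspose_mul_self X).1.eigenvectorUnitary : Matrix n n ℂ)) =
    Matrix.diagonal (fun k => ((Matrix.posSemidef_conjTranspose_mul_self X).1.eigenvalues k : ℂ)) := by
  set hH := Matrix.posSemidef_conjTranspose_mul_self X with hHdef
  set V : Matrix n n ℂ := (hH.1.eigenvectorUnitary : Matrix n n ℂ) with hV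
  have h := hH.1.conjStarAlgAut_star_eigenvectorUnitary
  rw [Unitary.conjStarAlgAut_star_apply, Matrix.star_eq_conjTranspose] at h
  calc (X * V)ᴴ * (X * V) = Vᴴ * (Xᴴ * X) * V := by
        rw [Matrix.conjTranspose_mul]
        simp only [Matrix.mul_assoc]
    _ = Matrix.diagonal (fun k => ((hH.1.eigenvalues k : ℂ))) := by
        rw [h]; rfl

theorem aux_hdiagentry (X : Matrix n n ℂ) (k l : n) :
    ∑ i, (starRingEnd ℂ) ((X * ((Matrix.posSemidef_conjTranspose_mul_self X).1.eigenvectorUnitary : Matrix n n ℂ)) i k) *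
      (X * ((Matrix.posSemidef_conjTranspose_mul_self X).1.eigenvectorUnitary : Matrix n n ℂ)) i l =
    if k = l then ((Matrix.posSemidef_conjTranspose_mul_self X).1.eigenvalues k : ℂ) else 0 := by
  have := congrFun (congrFun (aux_hdiag X) k) l
  simp only [Matrix.mul_apply, Matrix.conjTranspose_apply, Matrix.diagonal_apply] at this
  simpa [Matrix.mul_apply] using this

theorem aux_tn_eq (X : Matrix n n ℂ) :
    traceNorm X = ∑ k, Real.sqrt ((Matrix.posSemidef_conjTranspose_mul_self X).1.eigenvalues k) := by
  set hH := Matrix.posSemidef_conjTranspose_mul_self X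
  set V : Matrix n n ℂ := (hH.1.eigenvectorUnitary : Matrix n n ℂ) with hV
  have hVu : star V * V = 1 := Unitary.coe_star_mul_self hH.1.eigenvectorUnitary
  have : (V * Matrix.diagonal (((↑) : ℝ → ℂ) ∘ (Real.sqrt ∘ hH.1.eigenvalues)) * star V).trace = ∑ k, ((Real.sqrt (hH.1.eigenvalues k) : ℂ)) := by
    rw [Matrix.trace_mul_cycle, hVu, Matrix.one_mul, Matrix.trace_diagonal]
    rfl
  rw [traceNorm, this]
  simp

theorem aux_cs (f g : n → ℂ) : ‖∑ i, (starRingEnd ℂ) (f i) * g i‖ ≤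
    Real.sqrt (∑ i, ‖f i‖^2) * Real.sqrt (∑ i, ‖g i‖^2) := by
  have h := norm_inner_le_norm (𝕜 := ℂ) (E := EuclideanSpace ℂ n)
    ((WithLp.equiv 2 (n → ℂ)).symm f) ((WithLp.equiv 2 (n → ℂ)).symm g)
  simpa [PiLp.inner_apply, RCLike.inner_apply, EuclideanSpace.norm_eq, mul_comm] using h

theorem aux_L1 (X W : Matrix n n ℂ) (hW : W ∈ Matrix.unitaryGroup n ℂ) :
    (Wᴴ * X).trace.re ≤ traceNorm X := by
  set hH := Matrix.posSemidef_conjTranspose_mul_self X with hHdef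
  set V : Matrix n n ℂ := (hH.1.eigenvectorUnitary : Matrix n n ℂ) with hVdef
  have hV : V ∈ Matrix.unitaryGroup n ℂ := hH.1.eigenvectorUnitary.2
  set M : Matrix n n ℂ := W * V with hMdef
  have hM : M ∈ Matrix.unitaryGroup n ℂ := Submonoid.mul_mem _ hW hV
  set Q : Matrix n n ℂ := X * V with hQdef
  -- trace identity
  have htr : (Wᴴ * X).trace = (Mᴴ * Q).trace := by
    have : Mᴴ * Q = Vᴴ * ((Wᴴ * X) * V) := by
      rw [hMdef, hQdef, Matrix.conjTranspose_mul]
      simp only [Matrix.mul_assoc]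
    rw [this, ← Matrix.mul_assoc, Matrix.trace_mul_cycle]
    rw [show V * Vᴴ = 1 from Matrix.mem_unitaryGroup_iff.mp hV, Matrix.one_mul]
  -- column norms of M
  have hMcol : ∀ k, ∑ i, ‖M i k‖^2 = 1 := by
    intro k
    have h1 : Mᴴ * M = 1 := Matrix.mem_unitaryGroup_iff'.mp hM
    have := congrFun (congrFun h1 k) k
    simp only [Matrix.mul_apply, Matrix.conjTranspose_apply, Matrix.one_apply_eq] at this
    have := congrArg Complex.re this
    simpa [Complex.mul_conj', Complex.sq_norm, Complex.normSq_apply] using this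
  have hQcol : ∀ k, ∑ i, ‖Q i k‖^2 = hH.1.eigenvalues k := by
    intro k
    have := aux_hdiagentry X k k
    rw [if_pos rfl] at this
    have := congrArg Complex.re this
    simpa [Complex.mul_conj', Complex.sq_norm, Complex.normSq_apply] using this
  calc (Wᴴ * X).trace.re ≤ ‖(Wᴴ * X).trace‖ := Complex.re_le_norm _
    _ = ‖∑ k, ∑ i, (starRingEnd ℂ) (M i k) * Q i k‖ := by
        rw [htr]
        congr 1
    _ ≤ ∑ k, ‖∑ i, (starRingEnd ℂ) (M i k) * Q i k‖ := norm_sum_le _ _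
    _ ≤ ∑ k, Real.sqrt (∑ i, ‖M i k‖^2) * Real.sqrt (∑ i, ‖Q i k‖^2) :=
        Finset.sum_le_sum fun k _ => aux_cs _ _
    _ = ∑ k, Real.sqrt (hH.1.eigenvalues k) := by
        refine Finset.sum_congr rfl fun k _ => ?_
        rw [hMcol, hQcol, Real.sqrt_one, one_mul]
    _ = traceNorm X := (aux_tn_eq X).symm

theorem aux_L2 (C : Matrix n n ℂ) :
    ∃ P ∈ Matrix.unitaryGroup n ℂ, (Pᴴ * C).trace = ((traceNorm C : ℝ) : ℂ) := by
  classical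
  set hH := Matrix.posSemidef_conjTranspose_mul_self C with hHdef
  set lam := hH.1.eigenvalues with hlam
  set V : Matrix n n ℂ := (hH.1.eigenvectorUnitary : Matrix n n ℂ) with hVdef
  have hV : V ∈ Matrix.unitaryGroup n ℂ := hH.1.eigenvectorUnitary.2
  set Q : Matrix n n ℂ := C * V with hQdef
  have hlam0 : ∀ k, 0 ≤ lam k := hH.eigenvalues_nonneg
  have hQkl : ∀ k l, ∑ i, (starRingEnd ℂ) (Q i k) * Q i l = if k = l then (lam k : ℂ) else 0 :=
    fun k l => aux_hdiagentry C k l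
  -- columns of Q as Euclidean vectors
  set qcol : n → EuclideanSpace ℂ n := fun k => (WithLp.equiv 2 (n → ℂ)).symm (fun i => Q i k)
    with hqcol
  have hinner : ∀ k l, (inner ℂ (qcol k) (qcol l) : ℂ) = if k = l then (lam k : ℂ) else 0 := by
    intro k l
    rw [← hQkl k l]
    simp [PiLp.inner_apply, RCLike.inner_apply, hqcol, mul_comm]
  set u : n → EuclideanSpace ℂ n := fun k => ((Real.sqrt (lam k) : ℂ))⁻¹ • qcol k with hu
  set s : Set n := {k | lam k ≠ 0} with hs
  have hON : Orthonormal ℂ (s.restrict u) := by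
    rw [orthonormal_iff_ite]
    intro ⟨k, hk⟩ ⟨l, hl⟩
    simp only [Set.restrict_apply, Set.restrict, hu, inner_smul_left, inner_smul_right, hinner k l, map_inv₀,
      Complex.conj_ofReal]
    by_cases hkl : k = l
    · subst hkl
      simp only [if_true]
      have hklpos : 0 < lam k := lt_of_le_of_ne (hlam0 k) (Ne.symm hk)
      have : (lam k : ℂ) = (Real.sqrt (lam k) : ℂ) * (Real.sqrt (lam k) : ℂ) := by
        rw [← Complex.ofReal_mul, Real.mul_self_sqrt (hlam0 k)]
      rw [this]
      have hsne : ((Real.sqrt (lam k) : ℝ) : ℂ) ≠ 0 := by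
        simp only [ne_eq, Complex.ofReal_eq_zero]
        exact Real.sqrt_ne_zero'.mpr hklpos
      field_simp
    · simp [hkl, Subtype.mk.injEq]
  obtain ⟨b, hb⟩ := hON.exists_orthonormalBasis_extension_of_card_eq
    (by simp [finrank_euclideanSpace])
  set U' : Matrix n n ℂ := (EuclideanSpace.basisFun n ℂ).toBasis.toMatrix b.toBasis with hU'def
  have hU' : U' ∈ Matrix.unitaryGroup n ℂ :=
    (EuclideanSpace.basisFun n ℂ).toMatrix_orthonormalBasis_mem_unitary b
  have hU'app : ∀ i k, U' i k = b k i := fun i k => rfl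
  refine ⟨U' * Vᴴ, ?_, ?_⟩
  · rw [← Matrix.star_eq_conjTranspose]
    exact Submonoid.mul_mem _ hU' (Unitary.star_mem hV)
  · have h1 : (U' * Vᴴ)ᴴ * C = V * (U'ᴴ * C) := by
      rw [Matrix.conjTranspose_mul, Matrix.conjTranspose_conjTranspose, Matrix.mul_assoc]
    rw [h1, Matrix.trace_mul_comm, Matrix.mul_assoc, ← hQdef]
    have h2 : (U'ᴴ * Q).trace = ∑ k, ∑ i, (starRingEnd ℂ) (U' i k) * Q i k := by
      simp [Matrix.trace, Matrix.diag, Matrix.mul_apply, Matrix.conjTranspose_apply]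
    rw [h2, aux_tn_eq C, Complex.ofReal_sum]
    refine Finset.sum_congr rfl fun k _ => ?_
    by_cases hk : lam k ≠ 0
    · have hbk : b k = u k := hb k hk
      have : ∑ i, (starRingEnd ℂ) (U' i k) * Q i k = (inner ℂ (b k) (qcol k) : ℂ) := by
        simp [PiLp.inner_apply, RCLike.inner_apply, hqcol, hU'app, mul_comm]
      rw [this, hbk, hu]
      simp only [inner_smul_left, hinner k k, if_pos rfl, map_inv₀, Complex.conj_ofReal]
      have hklpos : 0 < lam k := lt_of_le_of_ne (hlam0 k) (Ne.symm hk)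
      have hsne : ((Real.sqrt (lam k) : ℝ) : ℂ) ≠ 0 := by
        simp only [ne_eq, Complex.ofReal_eq_zero]
        exact Real.sqrt_ne_zero'.mpr hklpos
      rw [show (lam k : ℂ) = (Real.sqrt (lam k) : ℂ) * (Real.sqrt (lam k) : ℂ) by
        rw [← Complex.ofReal_mul, Real.mul_self_sqrt (hlam0 k)]]
      field_simp
      rw [if_pos trivial, sq]
    · push_neg at hk
      have hq0 : ∀ i, Q i k = 0 := by
        have h0 : (inner ℂ (qcol k) (qcol k) : ℂ) = 0 := by rw [hinner k k, if_pos rfl, hk]; simp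
        have := inner_self_eq_zero.mp h0
        intro i
        have := congrFun (congrArg (WithLp.equiv 2 (n → ℂ)) this) i
        simpa [hqcol] using this
      have h0 : Real.sqrt (lam k) = 0 := by rw [hk, Real.sqrt_zero]
      show (∑ i, (starRingEnd ℂ) (U' i k) * Q i k) = ((Real.sqrt (lam k) : ℝ) : ℂ)
      simp [hq0, h0]


theorem Jle_apply (d_A d_B r : ℕ) (ε : ℝ) (V0 : Matrix (Fin d_B × Fin r) (Fin d_A) ℂ)
    (U : Matrix (Fin d_B × Fin r) (Fin d_B × Fin r) ℂ) (x y : Fin d_A × Fin 2 × Fin d_B) :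
    Jle d_A d_B r ε V0 U x y = ∑ e, (1/(d_A:ℂ)) *
      (Vfull ε V0 (U * Smat d_A d_B r) (x.2.1, x.2.2, e) x.1 *
        star (Vfull ε V0 (U * Smat d_A d_B r) (y.2.1, y.2.2, e) y.1)) := by
  unfold Jle ptrE4
  exact Finset.sum_congr rfl fun e _ =>
    sandwich (Vfull ε V0 (U * Smat d_A d_B r)) (Vfull ε V0 (U * Smat d_A d_B r))
      x.1 y.1 (x.2.1, x.2.2, e) (y.2.1, y.2.2, e)

theorem Cmat_apply (d_A d_B r : ℕ) (V0 : Matrix (Fin d_B × Fin r) (Fin d_A) ℂ)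
    (U₁ U₂ : Matrix (Fin d_B × Fin r) (Fin d_B × Fin r) ℂ) (x y : Fin d_A × Fin d_B) :
    Cmat d_A d_B r V0 U₁ U₂ x y = ∑ e, (1/(d_A:ℂ)) *
      (V0 (x.2, e) x.1 *
        star ((U₁ * Smat d_A d_B r - U₂ * Smat d_A d_B r) (y.2, e) y.1)) := by
  unfold Cmat ptrE
  exact Finset.sum_congr rfl fun e _ =>
    sandwich V0 (U₁ * Smat d_A d_B r - U₂ * Smat d_A d_B r) x.1 y.1 (x.2, e) (y.2, e)


set_option maxHeartbeats 800000 in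
theorem Delta01 (d_A d_B r : ℕ) (ε : ℝ) (V0 : Matrix (Fin d_B × Fin r) (Fin d_A) ℂ)
    (U₁ U₂ : Matrix (Fin d_B × Fin r) (Fin d_B × Fin r) ℂ) (a a' : Fin d_A) (b b' : Fin d_B) :
    (Jle d_A d_B r ε V0 U₁ - Jle d_A d_B r ε V0 U₂) (a, 0, b) (a', 1, b') =
      ((ε:ℂ) * (Real.sqrt (1-ε^2):ℂ)) * Cmat d_A d_B r V0 U₁ U₂ (a,b) (a',b') := by
  rw [Matrix.sub_apply, Jle_apply, Jle_apply, Cmat_apply, ← Finset.sum_sub_distrib,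
    Finset.mul_sum]
  refine Finset.sum_congr rfl fun e _ => ?_
  simp only [Vfull, Matrix.sub_apply]
  norm_num [Fin.ext_iff, star_sub, star_mul', Complex.conj_ofReal]
  ring

set_option maxHeartbeats 800000 in
theorem Delta10 (d_A d_B r : ℕ) (ε : ℝ) (V0 : Matrix (Fin d_B × Fin r) (Fin d_A) ℂ)
    (U₁ U₂ : Matrix (Fin d_B × Fin r) (Fin d_B × Fin r) ℂ) (a a' : Fin d_A) (b b' : Fin d_B) :
    (Jle d_A d_B r ε V0 U₁ - Jle d_A d_B r ε V0 U₂) (a, 1, b) (a', 0, b') =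
      ((ε:ℂ) * (Real.sqrt (1-ε^2):ℂ)) * star (Cmat d_A d_B r V0 U₁ U₂ (a',b') (a,b)) := by
  rw [Matrix.sub_apply, Jle_apply, Jle_apply, Cmat_apply, ← Finset.sum_sub_distrib]
  rw [star_sum, Finset.mul_sum]
  refine Finset.sum_congr rfl fun e _ => ?_
  simp only [Vfull, Matrix.sub_apply]
  norm_num [Fin.ext_iff, star_sub, star_mul', star_div₀, Complex.conj_ofReal]
  ring

theorem sum4_comm {A B A' B' : Type*} [Fintype A] [Fintype B] [Fintype A'] [Fintype B']
    (f : A → B → A' → B' → ℂ) :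
    ∑ a, ∑ b, ∑ c, ∑ d, f a b c d = ∑ c, ∑ d, ∑ a, ∑ b, f a b c d := by
  calc ∑ a, ∑ b, ∑ c, ∑ d, f a b c d
      = ∑ a, ∑ c, ∑ b, ∑ d, f a b c d :=
        Finset.sum_congr rfl fun a _ => Finset.sum_comm
    _ = ∑ c, ∑ a, ∑ b, ∑ d, f a b c d := Finset.sum_comm
    _ = ∑ c, ∑ a, ∑ d, ∑ b, f a b c d :=
        Finset.sum_congr rfl fun c _ => Finset.sum_congr rfl fun a _ => Finset.sum_comm
    _ = ∑ c, ∑ d, ∑ a, ∑ b, f a b c d :=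
        Finset.sum_congr rfl fun c _ => Finset.sum_comm

set_option maxHeartbeats 1000000 in
theorem traceW {A B : Type*} [Fintype A] [DecidableEq A] [Fintype B] [DecidableEq B]
    (P C : Matrix (A × B) (A × B) ℂ) (Δ : Matrix (A × Fin 2 × B) (A × Fin 2 × B) ℂ) (z : ℂ)
    (h01 : ∀ a b a' b', Δ (a, 0, b) (a', 1, b') = z * C (a,b) (a',b'))
    (h10 : ∀ a b a' b', Δ (a, 1, b) (a', 0, b') = z * star (C (a',b') (a,b))) :
    ((Matrix.of fun (x y : A × Fin 2 × B) =>
      if x.2.1 = 0 ∧ y.2.1 = 1 then P (x.1, x.2.2) (y.1, y.2.2)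
      else if x.2.1 = 1 ∧ y.2.1 = 0 then star (P (y.1, y.2.2) (x.1, x.2.2)) else 0)ᴴ * Δ).trace
      = z * (star ((Pᴴ * C).trace) + (Pᴴ * C).trace) := by
  have htr : (Pᴴ * C).trace = ∑ a : A, ∑ b : B, ∑ a' : A, ∑ b' : B,
      (starRingEnd ℂ) (P (a',b') (a,b)) * C (a',b') (a,b) := by
    simp [Matrix.trace, Matrix.diag, Matrix.mul_apply, Matrix.conjTranspose_apply,
      Fintype.sum_prod_type]
  have hstar : star ((Pᴴ * C).trace) = ∑ a : A, ∑ b : B, ∑ a' : A, ∑ b' : B,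
      P (a',b') (a,b) * star (C (a',b') (a,b)) := by
    rw [htr]
    simp only [star_sum, star_mul', RCLike.star_def, RingHomCompTriple.comp_apply,
      RingHom.id_apply, starRingEnd_self_apply, mul_comm]
  rw [hstar, htr]
  simp only [Matrix.trace, Matrix.diag, Matrix.mul_apply, Matrix.conjTranspose_apply,
    Matrix.of_apply, Fintype.sum_prod_type, Fin.sum_univ_two]
  simp only [show ¬((0:Fin 2) = 1) by decide, show ¬((1:Fin 2) = 0) by decide,
    show ((0:Fin 2) = 0) from rfl, show ((1:Fin 2) = 1) from rfl, true_and, and_true,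
    false_and, and_false, if_true, if_false, ite_false, ite_true, map_zero, zero_mul,
    Finset.sum_const_zero, add_zero, zero_add, h01, h10]
  simp only [star_zero, zero_mul, star_star, Finset.sum_const_zero, zero_add, add_zero,
    Finset.sum_add_distrib, Finset.mul_sum, mul_add]
  congr 1
  · rw [sum4_comm]
    refine Finset.sum_congr rfl fun a _ => Finset.sum_congr rfl fun b _ =>
      Finset.sum_congr rfl fun c _ => Finset.sum_congr rfl fun d _ => by rw [RCLike.star_def]; ring
  · refine Finset.sum_congr rfl fun a _ => Finset.sum_congr rfl fun b _ =>
      Finset.sum_congr rfl fun c _ => Finset.sum_congr rfl fun d _ => by rw [RCLike.star_def]; ring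

set_option maxHeartbeats 1000000 in
theorem Wunitary {A B : Type*} [Fintype A] [DecidableEq A] [Fintype B] [DecidableEq B]
    (P : Matrix (A × B) (A × B) ℂ) (hP : P ∈ Matrix.unitaryGroup (A × B) ℂ) :
    (Matrix.of fun (x y : A × Fin 2 × B) =>
      if x.2.1 = 0 ∧ y.2.1 = 1 then P (x.1, x.2.2) (y.1, y.2.2)
      else if x.2.1 = 1 ∧ y.2.1 = 0 then star (P (y.1, y.2.2) (x.1, x.2.2)) else 0)
      ∈ Matrix.unitaryGroup (A × Fin 2 × B) ℂ := by
  rw [Matrix.mem_unitaryGroup_iff]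
  have h1 := Matrix.mem_unitaryGroup_iff.mp hP
  have h2 := Matrix.mem_unitaryGroup_iff'.mp hP
  ext ⟨a, f, b⟩ ⟨a', f', b'⟩
  have e1 := congrFun (congrFun h1 (a,b)) (a',b')
  have e2 := congrFun (congrFun h2 (a,b)) (a',b')
  simp only [Matrix.mul_apply, Matrix.star_apply, Matrix.one_apply, Fintype.sum_prod_type] at e1 e2 ⊢
  fin_cases f <;> fin_cases f' <;>
    simp_all [Fin.sum_univ_two, Prod.ext_iff, mul_comm]

/-- `‖J_{U₁} − J_{U₂}‖₁ ≥ 2ε√(1−ε²)·‖C‖₁ − 2ε²` in the case `d_A ≤ r·d_B`. -/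
theorem stmt_18 (d_A d_B r : ℕ) (hA : 1 ≤ d_A) (hB : 1 ≤ d_B) (hr : 1 ≤ r)
    (hle : d_A ≤ r * d_B) (ε : ℝ) (hε0 : 0 < ε) (hε1 : ε < 1)
    (V0 : Matrix (Fin d_B × Fin r) (Fin d_A) ℂ) (hV0 : V0ᴴ * V0 = 1)
    (U₁ U₂ : Matrix.unitaryGroup (Fin d_B × Fin r) ℂ) :
    2 * ε * Real.sqrt (1 - ε ^ 2) * traceNorm (Cmat d_A d_B r V0 ↑U₁ ↑U₂) - 2 * ε ^ 2 ≤
      traceNorm (Jle d_A d_B r ε V0 ↑U₁ - Jle d_A d_B r ε V0 ↑U₂) := by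
  classical
  obtain ⟨P, hPu, hPtr⟩ := aux_L2 (Cmat d_A d_B r V0 ↑U₁ ↑U₂)
  set C := Cmat d_A d_B r V0 ↑U₁ ↑U₂ with hCdef
  set Δ := Jle d_A d_B r ε V0 ↑U₁ - Jle d_A d_B r ε V0 ↑U₂ with hΔdef
  set W := Matrix.of fun (x y : Fin d_A × Fin 2 × Fin d_B) =>
      if x.2.1 = 0 ∧ y.2.1 = 1 then P (x.1, x.2.2) (y.1, y.2.2)
      else if x.2.1 = 1 ∧ y.2.1 = 0 then star (P (y.1, y.2.2) (x.1, x.2.2)) else 0 with hWdef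
  have hWu := Wunitary P hPu
  have htrW := traceW P C Δ ((ε:ℂ) * ((Real.sqrt (1-ε^2) : ℝ):ℂ))
    (fun a b a' b' => Delta01 d_A d_B r ε V0 ↑U₁ ↑U₂ a a' b b')
    (fun a b a' b' => Delta10 d_A d_B r ε V0 ↑U₁ ↑U₂ a a' b b')
  have hre : (Wᴴ * Δ).trace = ((2 * ε * Real.sqrt (1-ε^2) * traceNorm C : ℝ) : ℂ) := by
    rw [hWdef, htrW, hPtr, RCLike.star_def, Complex.conj_ofReal]
    push_cast
    ring
  calc 2 * ε * Real.sqrt (1 - ε^2) * traceNorm C - 2 * ε^2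
      ≤ 2 * ε * Real.sqrt (1 - ε^2) * traceNorm C := sub_le_self _ (by positivity)
    _ = (Wᴴ * Δ).trace.re := by rw [hre, Complex.ofReal_re]
    _ ≤ traceNorm Δ := aux_L1 Δ W hWu


end Stmt
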